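/- The code map c : IndexedForests → Codes (finitely supported sequences of nonnegative integers) sending a forest F to the sequence c(F) where c(F)_i counts the internal nodes v of F whose leftmost leaf descendant is labeled i, is a bijection. -/

import Mathlib

/-- Rooted plane binary trees. -/
inductive PBTree : Type
  | leaf : PBTree
  | node : PBTree → PBTree → PBTree
deriving DecidableEq

/-- Number of leaves. -/
def PBTree.nleaves : PBTree → ℕ
  | .leaf => 1
  | .node l r => l.nleaves + r.nleaves

/-- An indexed forest: an infinite sequence of plane binary trees, all but
finitely many of which are trivial. -/
def IsForest (F : ℕ → PBTree) : Prop := {i | F i ≠ PBTree.leaf}.Finite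

/-- The label (0-based) of the leftmost leaf of the `i`-th tree of the forest:
leaves of the whole forest are labeled `0, 1, 2, …` from left to right. -/
def offset (F : ℕ → PBTree) (i : ℕ) : ℕ :=
  ∑ j ∈ Finset.range i, (F j).nleaves

/-- The code of a single tree whose leftmost leaf has label `k`: each internal
node `v` contributes `1` at the index `ρ(v)`, the label of the leaf reached
from `v` by descending along left edges. -/
noncomputable def codeT : PBTree → ℕ → (ℕ →₀ ℕ)
  | .leaf, _ => 0
  | .node l r, k => Finsupp.single k 1 + codeT l k + codeT r (k + l.nleaves)

/-- The code of an indexed forest. -/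
noncomputable def codeF (F : ℕ → PBTree) : ℕ →₀ ℕ :=
  ∑ᶠ i, codeT (F i) (offset F i)

/-! Reading a forest from the left, a trivial first tree only shifts the code by one place, while a
first tree `node l r` contributes its root at label `0` and leaves the code of the forest
`l, r, …`. Every code arises from `0` by these two moves, and whether the value at `0` vanishes
tells which move came last, so the forest is recovered uniquely by induction on the code. -/

open Finsupp

theorem finsum_nat_eq_zero_add_finsum_succ {M : Type*} [AddCommMonoid M] {f : ℕ → M}
    (hf : (Function.support f).Finite) : ∑ᶠ i, f i = f 0 + ∑ᶠ i, f (i + 1) := by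
  obtain ⟨N, hN⟩ := hf.bddAbove
  have hf' : Function.support f ⊆ Finset.range (N + 1) := fun i hi => by
    simpa [Nat.lt_succ_iff] using hN hi
  have hg : Function.support (fun i => f (i + 1)) ⊆ Finset.range N := fun i hi => by
    simpa using hN hi
  rw [finsum_eq_sum_of_support_subset f hf', finsum_eq_sum_of_support_subset _ hg,
    Finset.sum_range_succ', add_comm]

theorem Finsupp.mapDomain_add_one_apply_zero {M : Type*} [AddCommMonoid M] (c : ℕ →₀ M) :
    mapDomain (· + 1) c 0 = 0 :=
  mapDomain_of_notMem_range c 0 (by simp)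

theorem Finsupp.induction_single_zero_mapDomain_add_one {P : (ℕ →₀ ℕ) → Prop} (zero : P 0)
    (shift : ∀ c, P c → P (mapDomain (· + 1) c))
    (single_zero_add : ∀ c, P c → P (single 0 1 + c)) (c : ℕ →₀ ℕ) : P c := by
  obtain ⟨N, hN⟩ := Finset.exists_nat_subset_range c.support
  induction N generalizing c with
  | zero =>
    rw [Finset.range_zero, Finset.subset_empty, support_eq_empty] at hN
    exact hN ▸ zero
  | succ N ih =>
    have hd : P (comapDomain.addMonoidHom (add_left_injective 1) c) := ih _ fun i hi =>
      Finset.mem_range.2 <| Nat.succ_lt_succ_iff.1 <| Finset.mem_range.1 <| hN <| by simpa using hi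
    rw [← single_add_erase 0 c, ← mapDomain_comapDomain_nat_add_one]
    generalize comapDomain.addMonoidHom (add_left_injective 1) c = d at hd ⊢
    induction c 0 with
    | zero => simpa using shift d hd
    | succ n ihn => rw [add_comm n, single_add, add_assoc]; exact single_zero_add _ ihn

section seqCons

variable {α : Type*}

def seqCons (a : α) (s : ℕ → α) : ℕ → α
  | 0 => a
  | i + 1 => s i

infixr:67 " ::ₛ " => seqCons

@[simp] theorem seqCons_zero (a : α) (s : ℕ → α) : (a ::ₛ s) 0 = a := rfl

@[simp] theorem seqCons_succ (a : α) (s : ℕ → α) (i : ℕ) : (a ::ₛ s) (i + 1) = s i := rfl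

theorem seqCons_head_tail (s : ℕ → α) : s 0 ::ₛ (fun i => s (i + 1)) = s := by
  funext i; cases i <;> rfl

theorem seqCons_inj {a b : α} {s t : ℕ → α} : a ::ₛ s = b ::ₛ t ↔ a = b ∧ s = t :=
  ⟨fun h => ⟨congrFun h 0, funext fun i => congrFun h (i + 1)⟩,
    by rintro ⟨rfl, rfl⟩; rfl⟩

end seqCons

theorem codeT_add (t : PBTree) (k m : ℕ) : codeT t (k + m) = mapDomain (· + m) (codeT t k) := by
  induction t generalizing k with
  | leaf => simp [codeT]
  | node l r ihl ihr =>
    simp only [codeT, mapDomain_add, mapDomain_single, ihl, ← ihr, Nat.add_right_comm]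

theorem isForest_cons_iff {t : PBTree} {G : ℕ → PBTree} :
    IsForest (t ::ₛ G) ↔ IsForest G := by
  refine ⟨fun h => (h.preimage (add_left_injective 1).injOn).subset fun _ hi => by simpa using hi,
    fun h => ((h.image (· + 1)).insert 0).subset ?_⟩
  rintro (_ | i) hi
  · exact Set.mem_insert _ _
  · exact Set.mem_insert_of_mem _ ⟨i, hi, rfl⟩

theorem IsForest.exists_eq_cons {F : ℕ → PBTree} (hF : IsForest F) :
    ∃ t G, IsForest G ∧ F = t ::ₛ G :=
  ⟨F 0, _, isForest_cons_iff.1 (by rwa [seqCons_head_tail]), (seqCons_head_tail F).symm⟩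

theorem offset_cons_succ (t : PBTree) (G : ℕ → PBTree) (i : ℕ) :
    offset (t ::ₛ G) (i + 1) = offset G i + t.nleaves :=
  Finset.sum_range_succ' _ _

theorem codeF_cons {G : ℕ → PBTree} (hG : IsForest G) (t : PBTree) :
    codeF (t ::ₛ G) = codeT t 0 + mapDomain (· + t.nleaves) (codeF G) := by
  have hfin : (Function.support fun i => codeT ((t ::ₛ G) i) (offset (t ::ₛ G) i)).Finite :=
    (isForest_cons_iff (t := t)).2 hG |>.subset fun i hi h => hi (by simp only [h]; rfl)
  rw [codeF, finsum_nat_eq_zero_add_finsum_succ hfin, codeF, ← mapDomain.addMonoidHom_apply,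
    AddMonoidHom.map_finsum_of_injective _ (mapDomain_injective (add_left_injective _))]
  simp only [offset_cons_succ, codeT_add, mapDomain.addMonoidHom_apply, seqCons_succ]
  rfl

theorem codeF_const_leaf : codeF (fun _ => .leaf) = 0 := by
  simp [codeF, codeT]

theorem codeF_cons_leaf {G : ℕ → PBTree} (hG : IsForest G) :
    codeF (.leaf ::ₛ G) = mapDomain (· + 1) (codeF G) := by
  simpa [codeT, PBTree.nleaves] using codeF_cons hG .leaf

theorem codeF_cons_node {G : ℕ → PBTree} (hG : IsForest G) (l r : PBTree) :
    codeF (.node l r ::ₛ G) = single 0 1 + codeF (l ::ₛ r ::ₛ G) := by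
  have hcomp : (· + l.nleaves) ∘ (· + r.nleaves) = (· + (l.nleaves + r.nleaves)) := by
    funext i; simp only [Function.comp_apply]; omega
  rw [codeF_cons hG, codeF_cons (isForest_cons_iff.2 hG), codeF_cons hG, codeT, mapDomain_add,
    ← codeT_add, ← mapDomain_comp, hcomp, PBTree.nleaves]
  abel

theorem codeF_cons_eq_mapDomain_iff {G : ℕ → PBTree} (hG : IsForest G) {t : PBTree}
    {c : ℕ →₀ ℕ} :
    codeF (t ::ₛ G) = mapDomain (· + 1) c ↔ t = .leaf ∧ codeF G = c := by
  cases t with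
  | leaf => simp [codeF_cons_leaf hG, (mapDomain_injective (add_left_injective 1)).eq_iff]
  | node l r =>
    simp only [reduceCtorEq, false_and, iff_false]
    intro h
    simpa [codeF_cons_node hG, mapDomain_add_one_apply_zero] using congrArg (· 0) h

theorem codeF_cons_eq_single_add_iff {G : ℕ → PBTree} (hG : IsForest G) {t : PBTree}
    {c : ℕ →₀ ℕ} :
    codeF (t ::ₛ G) = single 0 1 + c ↔
      ∃ l r, t = .node l r ∧ codeF (l ::ₛ r ::ₛ G) = c := by
  cases t with
  | leaf =>
    simp only [reduceCtorEq, false_and, exists_false, iff_false]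
    intro h
    have h0 := congrArg (· 0) h
    simp only [codeF_cons_leaf hG, mapDomain_add_one_apply_zero, Finsupp.add_apply,
      single_eq_same] at h0
    omega
  | node l r => simp [codeF_cons_node hG]

theorem eq_leaf_of_codeF_eq_zero {F : ℕ → PBTree} (hF : IsForest F) (h : codeF F = 0)
    (n : ℕ) : F n = .leaf := by
  obtain ⟨t, G, hG, rfl⟩ := hF.exists_eq_cons
  rw [← mapDomain_zero (f := (· + 1)), codeF_cons_eq_mapDomain_iff hG] at h
  cases n with
  | zero => exact h.1
  | succ n => exact eq_leaf_of_codeF_eq_zero hG h.2 n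

theorem injOn_codeF : Set.InjOn codeF {F | IsForest F} := by
  suffices ∀ c F F', IsForest F → IsForest F' → codeF F = c → codeF F' = c → F = F' from
    fun F hF F' hF' h => this _ F F' hF hF' rfl h.symm
  intro c
  induction c using Finsupp.induction_single_zero_mapDomain_add_one with
  | zero =>
    intro F F' hF hF' h h'
    funext n
    rw [eq_leaf_of_codeF_eq_zero hF h, eq_leaf_of_codeF_eq_zero hF' h']
  | shift c ih =>
    intro F F' hF hF' h h'
    obtain ⟨t, G, hG, rfl⟩ := hF.exists_eq_cons
    obtain ⟨t', G', hG', rfl⟩ := hF'.exists_eq_cons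
    obtain ⟨rfl, hc⟩ := (codeF_cons_eq_mapDomain_iff hG).1 h
    obtain ⟨rfl, hc'⟩ := (codeF_cons_eq_mapDomain_iff hG').1 h'
    rw [ih G G' hG hG' hc hc']
  | single_zero_add c ih =>
    intro F F' hF hF' h h'
    obtain ⟨t, G, hG, rfl⟩ := hF.exists_eq_cons
    obtain ⟨t', G', hG', rfl⟩ := hF'.exists_eq_cons
    obtain ⟨l, r, rfl, hc⟩ := (codeF_cons_eq_single_add_iff hG).1 h
    obtain ⟨l', r', rfl, hc'⟩ := (codeF_cons_eq_single_add_iff hG').1 h'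
    have := ih _ _ (isForest_cons_iff.2 (isForest_cons_iff.2 hG))
      (isForest_cons_iff.2 (isForest_cons_iff.2 hG')) hc hc'
    obtain ⟨rfl, rfl, rfl⟩ : l = l' ∧ r = r' ∧ G = G' := by
      simpa only [seqCons_inj] using this
    rfl

theorem exists_isForest_codeF_eq (c : ℕ →₀ ℕ) : ∃ F, IsForest F ∧ codeF F = c := by
  induction c using Finsupp.induction_single_zero_mapDomain_add_one with
  | zero => exact ⟨_, by simp [IsForest], codeF_const_leaf⟩
  | shift c ih =>
    obtain ⟨F, hF, rfl⟩ := ih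
    exact ⟨_, isForest_cons_iff.2 hF, codeF_cons_leaf hF⟩
  | single_zero_add c ih =>
    obtain ⟨F, hF, rfl⟩ := ih
    obtain ⟨l, F', hF', rfl⟩ := hF.exists_eq_cons
    obtain ⟨r, G, hG, rfl⟩ := hF'.exists_eq_cons
    exact ⟨_, isForest_cons_iff.2 hG, codeF_cons_node hG l r⟩

/-- The code map from indexed forests to finitely supported
sequences of nonnegative integers is a bijection. -/
theorem code_bijective :
    Function.Bijective (fun F : {F : ℕ → PBTree // IsForest F} => codeF F.1) := by
  refine ⟨fun F F' h => Subtype.ext (injOn_codeF F.2 F'.2 h), fun c => ?_⟩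
  obtain ⟨F, hF, rfl⟩ := exists_isForest_codeF_eq c
  exact ⟨⟨F, hF⟩, rfl⟩
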